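/- arXiv:math/0204114 — 2 statements merged into one kernel-verified Lean document; each statement's English description precedes it below -/
import Mathlib

section
/- The map d(x,y) = ρ(x−y) defines a metric on ℝⁿ: it is nonnegative, vanishes iff x = y, is symmetric, and satisfies the triangle inequality ρ(x+y) ≤ ρ(x) + ρ(y). -/
/-!
The triangle inequality rests on a one-variable estimate: for `p ≥ 1` and `s, r > 0`,
`(x + y)² (s + r)^{-p} ≤ x² s^{-p} + y² r^{-p}`, which is Sedrakyan's inequality
`(x + y)² / (u + v) ≤ x² / u + y² / v` combined with `s^p + r^p ≤ (s + r)^p`.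
Applied coordinatewise with `p = 2αᵢ - 1`, it shows that `t ↦ t · ∑ᵢ xᵢ² t^{-2αᵢ}` is jointly
subadditive in `(x, t)`, so `t = ρ(x) + ρ(y)` satisfies `∑ᵢ (xᵢ + yᵢ)² t^{-2αᵢ} ≤ 1`.
Since this sum is strictly decreasing in `t`, it follows that `ρ(x + y) ≤ t`.
-/

open Finset Real Set

lemma sq_add_div_add_le {x y u v : ℝ} (hu : 0 < u) (hv : 0 < v) :
    (x + y) ^ 2 / (u + v) ≤ x ^ 2 / u + y ^ 2 / v := by
  simpa [Fin.sum_univ_two] using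
    sq_sum_div_le_sum_sq_div univ ![x, y] (g := ![u, v]) (by simp [Fin.forall_fin_two, hu, hv])

lemma sq_add_mul_rpow_neg_le {x y s r p : ℝ} (hs : 0 < s) (hr : 0 < r) (hp : 1 ≤ p) :
    (x + y) ^ 2 * (s + r) ^ (-p) ≤ x ^ 2 * s ^ (-p) + y ^ 2 * r ^ (-p) := by
  simp only [rpow_neg hs.le, rpow_neg hr.le, rpow_neg (hs.le.trans (le_add_of_nonneg_right hr.le)),
    ← div_eq_mul_inv]
  calc (x + y) ^ 2 / (s + r) ^ p ≤ (x + y) ^ 2 / (s ^ p + r ^ p) := by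
        gcongr
        exact add_rpow_le_rpow_add hs.le hr.le hp
    _ ≤ x ^ 2 / s ^ p + y ^ 2 / r ^ p := sq_add_div_add_le (by positivity) (by positivity)

noncomputable def gaugeSum {n : ℕ} (α : Fin n → ℝ) (x : Fin n → ℝ) (t : ℝ) : ℝ :=
  ∑ i, x i ^ 2 * t ^ (-(2 * α i))

lemma gaugeSum_strictAntiOn {n : ℕ} {α : Fin n → ℝ} (hα : ∀ i, 0 < α i) {x : Fin n → ℝ}
    (hx : x ≠ 0) : StrictAntiOn (gaugeSum α x) (Ioi 0) := by
  intro s hs t _ hst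
  obtain ⟨i₀, hi₀⟩ := Function.ne_iff.mp hx
  have hexp : ∀ i, -(2 * α i) < 0 := fun i => by linarith [hα i]
  refine sum_lt_sum (fun i _ => ?_) ⟨i₀, mem_univ _, ?_⟩
  · exact mul_le_mul_of_nonneg_left (rpow_le_rpow_of_nonpos hs hst.le (hexp i).le) (sq_nonneg _)
  · exact mul_lt_mul_of_pos_left (rpow_lt_rpow_of_neg hs hst (hexp i₀)) (sq_pos_of_ne_zero hi₀)

lemma le_of_gaugeSum_le_one {n : ℕ} {α : Fin n → ℝ} (hα : ∀ i, 0 < α i) {x : Fin n → ℝ}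
    (hx : x ≠ 0) {ρ t : ℝ} (hρ : 0 < ρ) (hρx : gaugeSum α x ρ = 1) (ht : 0 < t)
    (htx : gaugeSum α x t ≤ 1) : ρ ≤ t :=
  ((gaugeSum_strictAntiOn hα hx).le_iff_ge (mem_Ioi.2 ht) (mem_Ioi.2 hρ)).1 (hρx ▸ htx)

lemma mul_gaugeSum_add_le {n : ℕ} {α : Fin n → ℝ} (hα : ∀ i, 1 ≤ α i) (x y : Fin n → ℝ)
    {s r : ℝ} (hs : 0 < s) (hr : 0 < r) :
    (s + r) * gaugeSum α (x + y) (s + r) ≤ s * gaugeSum α x s + r * gaugeSum α y r := by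
  have hmul : ∀ {t : ℝ}, 0 < t → ∀ c : ℝ, t * t ^ (-c) = t ^ (-(c - 1)) := fun ht c => by
    rw [show -(c - 1) = 1 + -c by ring, rpow_add ht, rpow_one]
  simp only [gaugeSum, mul_sum, ← sum_add_distrib]
  refine sum_le_sum fun i _ => ?_
  calc (s + r) * ((x + y) i ^ 2 * (s + r) ^ (-(2 * α i)))
      = (x i + y i) ^ 2 * (s + r) ^ (-(2 * α i - 1)) := by
        rw [← hmul (by positivity)]; simp only [Pi.add_apply]; ring
    _ ≤ x i ^ 2 * s ^ (-(2 * α i - 1)) + y i ^ 2 * r ^ (-(2 * α i - 1)) :=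
        sq_add_mul_rpow_neg_le hs hr (by linarith [hα i])
    _ = _ := by rw [← hmul hs, ← hmul hr]; ring

/-- `d(x,y) = ρ(x−y)` is a metric on ℝⁿ: ρ is nonnegative, vanishes only at 0,
is even (symmetry of d) and subadditive (triangle inequality). -/
theorem stmt_2 {n : ℕ} (α : Fin n → ℝ) (hα : ∀ i, 1 ≤ α i)
    (ρ : (Fin n → ℝ) → ℝ) (hρ0 : ρ 0 = 0)
    (hρpos : ∀ x, x ≠ 0 → 0 < ρ x)
    (hρeq : ∀ x, x ≠ 0 → ∑ i, x i ^ 2 * (ρ x) ^ (-(2 * α i)) = 1)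
    (hρuniq : ∀ x, x ≠ 0 → ∀ t : ℝ, 0 < t →
      (∑ i, x i ^ 2 * t ^ (-(2 * α i)) = 1) → t = ρ x) :
    (∀ x, 0 ≤ ρ x) ∧
    (∀ x, ρ x = 0 ↔ x = 0) ∧
    (∀ x, ρ (-x) = ρ x) ∧
    (∀ x y, ρ (x + y) ≤ ρ x + ρ y) := by
  have hρeq' : ∀ x, x ≠ 0 → gaugeSum α x (ρ x) = 1 := hρeq
  refine ⟨fun x => ?_, fun x => ⟨fun h => ?_, fun h => h ▸ hρ0⟩, fun x => ?_, fun x y => ?_⟩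
  · rcases eq_or_ne x 0 with rfl | hx
    · exact hρ0.ge
    · exact (hρpos x hx).le
  · by_contra hx
    exact (hρpos x hx).ne' h
  · rcases eq_or_ne x 0 with rfl | hx
    · rw [neg_zero]
    · exact (hρuniq (-x) (neg_ne_zero.2 hx) _ (hρpos x hx) (by simpa using hρeq x hx)).symm
  rcases eq_or_ne x 0 with rfl | hx
  · simp [hρ0]
  rcases eq_or_ne y 0 with rfl | hy
  · simp [hρ0]
  have hs := hρpos x hx
  have hr := hρpos y hy
  rcases eq_or_ne (x + y) 0 with hxy | hxy
  · rw [hxy, hρ0]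
    positivity
  refine le_of_gaugeSum_le_one (fun i => one_pos.trans_le (hα i)) hxy (hρpos _ hxy)
    (hρeq' _ hxy) (by positivity) ?_
  have h := mul_gaugeSum_add_le hα x y hs hr
  rw [hρeq' x hx, hρeq' y hy, mul_one, mul_one] at h
  exact (mul_le_iff_le_one_right (by positivity)).1 h
end

section
/- (Hörmander integral condition) The kernel H(x) = Y(x/ρ(x))ρ(x)^{−α}, with Y a spherical harmonic of degree m, satisfies ∫_{ρ(y) ≥ 4ρ(x)} |H(y−x) − H(y)| dy ≤ C with C independent of x ∈ ℝⁿ \ {0} (C may depend on m, n, α). -/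
/-!
Write `H z = Y (normalize z) * ρ z ^ (-A)`, where `normalize z` is the point of the unit
`ρ`-sphere with coordinates `z i / ρ z ^ α i`; `Y` is a polynomial, so it is bounded and Lipschitz
on the unit ball. Since every `α i ≥ 1`, `ρ` satisfies the triangle inequality, so for
`ρ y ≥ 2 ρ x` we have `ρ (y - x) ≥ ρ y / 2`, and moving `y` to `y - x` changes both `normalize` and
the radial factor by `≲ ρ x / ρ y`. This gives `|H (y - x) - H y| ≲ ρ x * ρ y ^ (-(A + 1))`.
Integrating over the dyadic annuli `2 ^ k r ≤ ρ < 2 ^ (k + 1) r`, of volume `≲ (2 ^ k r) ^ A`,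
turns the integral into a geometric series bounded by `ρ x / r`, with `r = 4 ρ x`.
-/

open MvPolynomial MeasureTheory

lemma abs_rpow_neg_sub_rpow_neg_le {β c a b : ℝ} (hβ : 0 ≤ β) (hc : 0 < c) (ha : c ≤ a)
    (hb : c ≤ b) : |a ^ (-β) - b ^ (-β)| ≤ β * c ^ (-β - 1) * |a - b| := by
  have hderiv : ∀ t ∈ Set.Ici c, ‖deriv (fun t : ℝ => t ^ (-β)) t‖ ≤ β * c ^ (-β - 1) := by
    intro t ht
    have htpos : 0 < t := hc.trans_le ht
    rw [Real.deriv_rpow_const, Real.norm_eq_abs, abs_mul, abs_neg, abs_of_nonneg hβ,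
      abs_of_nonneg (Real.rpow_nonneg htpos.le _)]
    exact mul_le_mul_of_nonneg_left (Real.rpow_le_rpow_of_nonpos hc ht (by linarith)) hβ
  simpa [Real.norm_eq_abs] using Convex.norm_image_sub_le_of_norm_deriv_le
    (fun t ht => (Real.hasDerivAt_rpow_const (Or.inl (hc.trans_le ht).ne')).differentiableAt)
    hderiv (convex_Ici c) hb ha

lemma abs_rpow_neg_sub_rpow_neg_le_of_half_le {β S T : ℝ} (hβ : 0 ≤ β) (hT : 0 < T)
    (hS : T / 2 ≤ S) : |S ^ (-β) - T ^ (-β)| ≤ β * 2 ^ (β + 1) * T ^ (-(β + 1)) * |S - T| := by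
  have hhalf : (T / 2) ^ (-β - 1) = 2 ^ (β + 1) * T ^ (-(β + 1)) := by
    rw [show -β - 1 = -(β + 1) by ring, Real.div_rpow hT.le zero_le_two, Real.rpow_neg hT.le,
      Real.rpow_neg zero_le_two]
    field_simp
  calc |S ^ (-β) - T ^ (-β)| ≤ β * (T / 2) ^ (-β - 1) * |S - T| :=
        abs_rpow_neg_sub_rpow_neg_le hβ (half_pos hT) hS (half_le_self hT.le)
    _ = β * 2 ^ (β + 1) * T ^ (-(β + 1)) * |S - T| := by rw [hhalf]; ring

namespace MixedHomogeneous

variable {n : ℕ} {α : Fin n → ℝ}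

noncomputable def gauge (α : Fin n → ℝ) (t : ℝ) (x : Fin n → ℝ) : ℝ :=
  ∑ i, x i ^ 2 * t ^ (-(2 * α i))

lemma gauge_eq_sum_sq {t : ℝ} (ht : 0 < t) (x : Fin n → ℝ) :
    gauge α t x = ∑ i, (x i / t ^ α i) ^ 2 := by
  refine Finset.sum_congr rfl fun i _ => ?_
  rw [div_pow, ← Real.rpow_natCast (t ^ α i), ← Real.rpow_mul ht.le, Real.rpow_neg ht.le,
    div_eq_mul_inv, Nat.cast_ofNat, mul_comm (α i)]

lemma gauge_strictAntiOn (hα : ∀ i, 0 < α i) {x : Fin n → ℝ} (hx : x ≠ 0) :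
    StrictAntiOn (gauge α · x) (Set.Ioi 0) := by
  intro s hs t _ hst
  obtain ⟨j, hj⟩ := Function.ne_iff.mp hx
  refine Finset.sum_lt_sum (fun i _ => ?_) ⟨j, Finset.mem_univ _, ?_⟩
  · exact mul_le_mul_of_nonneg_left
      (Real.rpow_le_rpow_of_nonpos hs hst.le (by linarith [hα i])) (sq_nonneg _)
  · exact mul_lt_mul_of_pos_left
      (Real.rpow_lt_rpow_of_neg hs hst (by linarith [hα j])) (sq_pos_of_ne_zero hj)

lemma gauge_le_mul_sq (hα : ∀ i, 1 ≤ α i) {r s : ℝ} (hr : 0 < r) (hrs : r ≤ s)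
    (x : Fin n → ℝ) : gauge α s x ≤ gauge α r x * (r / s) ^ 2 := by
  have hs : 0 < s := hr.trans_le hrs
  rw [gauge_eq_sum_sq hs, gauge_eq_sum_sq hr, Finset.sum_mul]
  refine Finset.sum_le_sum fun i _ => ?_
  have hq : 0 < r / s := div_pos hr hs
  have hscale : (r / s) ^ α i ≤ r / s := by
    simpa using Real.rpow_le_rpow_of_exponent_ge hq ((div_le_one hs).mpr hrs) (hα i)
  have hsplit : x i / s ^ α i = x i / r ^ α i * (r / s) ^ α i := by
    rw [Real.div_rpow hr.le hs.le]
    field_simp [(Real.rpow_pos_of_pos hr (α i)).ne']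
  rw [hsplit, mul_pow]
  gcongr

lemma gauge_eq_norm_sq {t : ℝ} (ht : 0 < t) (x : Fin n → ℝ) :
    gauge α t x = ‖(WithLp.toLp 2 fun i => x i / t ^ α i : EuclideanSpace ℝ (Fin n))‖ ^ 2 := by
  simp [EuclideanSpace.norm_sq_eq, gauge_eq_sum_sq ht, ← abs_div]

/-- The fields determine `ρ` when all `α i > 0`, see `IsNorm.eq_of_gauge_eq_one`. -/
structure IsNorm (α : Fin n → ℝ) (ρ : (Fin n → ℝ) → ℝ) : Prop where
  map_zero : ρ 0 = 0
  pos : ∀ x, x ≠ 0 → 0 < ρ x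
  gauge_eq_one : ∀ x, x ≠ 0 → gauge α (ρ x) x = 1

noncomputable def normalize (α : Fin n → ℝ) (ρ : (Fin n → ℝ) → ℝ) (x : Fin n → ℝ) :
    Fin n → ℝ :=
  fun i => x i / ρ x ^ α i

namespace IsNorm

variable {ρ : (Fin n → ℝ) → ℝ}

lemma nonneg (hρ : IsNorm α ρ) (x : Fin n → ℝ) : 0 ≤ ρ x := by
  rcases eq_or_ne x 0 with rfl | hx
  · exact hρ.map_zero.ge
  · exact (hρ.pos x hx).le

lemma le_iff_gauge_le_one (hρ : IsNorm α ρ) (hα : ∀ i, 0 < α i) {x : Fin n → ℝ} (hx : x ≠ 0)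
    {t : ℝ} (ht : 0 < t) : ρ x ≤ t ↔ gauge α t x ≤ 1 := by
  rw [← hρ.gauge_eq_one x hx]
  exact ((gauge_strictAntiOn hα hx).le_iff_ge ht (hρ.pos x hx)).symm

lemma eq_of_gauge_eq_one (hρ : IsNorm α ρ) (hα : ∀ i, 0 < α i) {x : Fin n → ℝ} (hx : x ≠ 0)
    {t : ℝ} (ht : 0 < t) (h : gauge α t x = 1) : ρ x = t :=
  (gauge_strictAntiOn hα hx).injOn (hρ.pos x hx) ht (by rw [hρ.gauge_eq_one x hx, h])

lemma map_neg (hρ : IsNorm α ρ) (hα : ∀ i, 0 < α i) (x : Fin n → ℝ) : ρ (-x) = ρ x := by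
  rcases eq_or_ne x 0 with rfl | hx
  · rw [neg_zero]
  have hx' : -x ≠ 0 := neg_ne_zero.mpr hx
  refine (hρ.eq_of_gauge_eq_one hα hx (hρ.pos _ hx') ?_).symm
  simpa [gauge] using hρ.gauge_eq_one _ hx'

/-- With `s = ρ a + ρ b`, the rescaled vectors `a i / s ^ α i` and `b i / s ^ α i` have Euclidean
norms at most `ρ a / s` and `ρ b / s`, so the Euclidean triangle inequality gives
`gauge α s (a + b) ≤ 1`. -/
lemma add_le (hρ : IsNorm α ρ) (hα : ∀ i, 1 ≤ α i) (a b : Fin n → ℝ) :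
    ρ (a + b) ≤ ρ a + ρ b := by
  have hα₀ : ∀ i, 0 < α i := fun i => one_pos.trans_le (hα i)
  rcases eq_or_ne a 0 with rfl | ha
  · simp [hρ.map_zero]
  rcases eq_or_ne b 0 with rfl | hb
  · simp [hρ.map_zero]
  rcases eq_or_ne (a + b) 0 with hab | hab
  · rw [hab, hρ.map_zero]
    exact add_nonneg (hρ.nonneg a) (hρ.nonneg b)
  set s := ρ a + ρ b
  have hs : 0 < s := add_pos (hρ.pos a ha) (hρ.pos b hb)
  let e : (Fin n → ℝ) → EuclideanSpace ℝ (Fin n) := fun z => WithLp.toLp 2 fun i => z i / s ^ α i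
  have he : e (a + b) = e a + e b := by
    ext i
    simp [e, add_div]
  have hnorm : ∀ z, z ≠ 0 → ρ z ≤ s → ‖e z‖ ≤ ρ z / s := by
    intro z hz hzs
    have hgauge := gauge_le_mul_sq hα (hρ.pos z hz) hzs z
    rw [hρ.gauge_eq_one z hz, one_mul, gauge_eq_norm_sq hs] at hgauge
    exact (pow_le_pow_iff_left₀ (norm_nonneg _) (div_pos (hρ.pos z hz) hs).le two_ne_zero).mp
      hgauge
  have htri : ‖e (a + b)‖ ≤ 1 := by
    calc ‖e (a + b)‖ ≤ ‖e a‖ + ‖e b‖ := he ▸ norm_add_le _ _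
      _ ≤ ρ a / s + ρ b / s :=
        add_le_add (hnorm a ha (le_add_of_nonneg_right (hρ.nonneg b)))
          (hnorm b hb (le_add_of_nonneg_left (hρ.nonneg a)))
      _ = 1 := by rw [← add_div, div_self hs.ne']
  rw [hρ.le_iff_gauge_le_one hα₀ hab hs, gauge_eq_norm_sq hs]
  exact pow_le_one₀ (norm_nonneg _) htri

lemma abs_sub_map_sub_le (hρ : IsNorm α ρ) (hα : ∀ i, 1 ≤ α i) (x y : Fin n → ℝ) :
    |ρ (y - x) - ρ y| ≤ ρ x := by
  have h₁ : ρ y ≤ ρ (y - x) + ρ x := by simpa using hρ.add_le hα (y - x) x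
  have h₂ : ρ (y - x) ≤ ρ y + ρ x := by
    simpa [sub_eq_add_neg, hρ.map_neg (fun i => one_pos.trans_le (hα i))] using
      hρ.add_le hα y (-x)
  exact abs_sub_le_iff.mpr ⟨by linarith, by linarith⟩

lemma abs_normalize_apply_le_one (hρ : IsNorm α ρ) (x : Fin n → ℝ) (i : Fin n) :
    |normalize α ρ x i| ≤ 1 := by
  rcases eq_or_ne x 0 with rfl | hx
  · simp [normalize]
  rw [← sq_le_one_iff_abs_le_one, ← hρ.gauge_eq_one x hx, gauge_eq_sum_sq (hρ.pos x hx)]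
  exact Finset.single_le_sum (f := fun j => (x j / ρ x ^ α j) ^ 2)
    (fun j _ => sq_nonneg _) (Finset.mem_univ i)

lemma norm_normalize_le_one (hρ : IsNorm α ρ) (x : Fin n → ℝ) : ‖normalize α ρ x‖ ≤ 1 :=
  (pi_norm_le_iff_of_nonneg zero_le_one).mpr fun i => by
    simpa [Real.norm_eq_abs] using hρ.abs_normalize_apply_le_one x i

lemma abs_apply_le (hρ : IsNorm α ρ) (x : Fin n → ℝ) (i : Fin n) : |x i| ≤ ρ x ^ α i := by
  rcases eq_or_ne x 0 with rfl | hx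
  · simpa [hρ.map_zero] using Real.rpow_nonneg le_rfl (α i)
  have hpos := Real.rpow_pos_of_pos (hρ.pos x hx) (α i)
  have := hρ.abs_normalize_apply_le_one x i
  rwa [normalize, abs_div, abs_of_pos hpos, div_le_one hpos] at this

lemma volume_setOf_le_le (hρ : IsNorm α ρ) (hα : ∀ i, 0 ≤ α i) {R : ℝ} (hR : 0 ≤ R) :
    volume {y | ρ y ≤ R} ≤ ENNReal.ofReal (2 ^ n * R ^ ∑ i, α i) := by
  have hbox : {y | ρ y ≤ R} ⊆ Set.Icc (fun i => -R ^ α i) (fun i => R ^ α i) := fun y hy => by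
    have h i := abs_le.mp ((hρ.abs_apply_le y i).trans (Real.rpow_le_rpow (hρ.nonneg y) hy (hα i)))
    exact ⟨fun i => (h i).1, fun i => (h i).2⟩
  calc volume {y | ρ y ≤ R}
      ≤ volume (Set.Icc (fun i => -R ^ α i) (fun i => R ^ α i)) := measure_mono hbox
    _ = ∏ i, ENNReal.ofReal (2 * R ^ α i) := by
      rw [Real.volume_Icc_pi]
      simp only [sub_neg_eq_add, two_mul]
    _ = ENNReal.ofReal (2 ^ n * R ^ ∑ i, α i) := by
      rw [← ENNReal.ofReal_prod_of_nonneg fun i _ => by positivity, Finset.prod_mul_distrib,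
        Finset.prod_const, Finset.card_univ, Fintype.card_fin,
        Real.rpow_sum_of_nonneg hR fun i _ => hα i]

lemma setLIntegral_le_of_le_rpow_neg (hρ : IsNorm α ρ) (hα : ∀ i, 0 ≤ α i) {r B : ℝ}
    (hr : 0 < r) (hB : 0 ≤ B) {f : (Fin n → ℝ) → ENNReal}
    (hf : ∀ y, r ≤ ρ y → f y ≤ ENNReal.ofReal (B * ρ y ^ (-(∑ i, α i + 1)))) :
    ∫⁻ y in {y | r ≤ ρ y}, f y ≤ ENNReal.ofReal (B * 2 ^ n * 2 ^ (∑ i, α i) / r * 2) := by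
  set A := ∑ i, α i
  have hA : 0 ≤ A := Finset.sum_nonneg fun i _ => hα i
  set c : ℝ := B * 2 ^ n * 2 ^ A / r
  let annulus : ℕ → Set (Fin n → ℝ) := fun k => {y | 2 ^ k * r ≤ ρ y ∧ ρ y < 2 ^ (k + 1) * r}
  have hcover : {y | r ≤ ρ y} ⊆ ⋃ k, annulus k := by
    intro y hy
    obtain ⟨k, hk, hk'⟩ := exists_nat_pow_near ((one_le_div hr).mpr hy) one_lt_two
    exact Set.mem_iUnion.mpr ⟨k, (le_div_iff₀ hr).mp hk, (div_lt_iff₀ hr).mp hk'⟩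
  have hannulus : ∀ k : ℕ, ∫⁻ y in annulus k, f y ≤ ENNReal.ofReal (c * (1 / 2) ^ k) := by
    intro k
    set t : ℝ := 2 ^ k * r
    have ht : 0 < t := by positivity
    have hvol : volume (annulus k) ≤ ENNReal.ofReal (2 ^ n * (2 * t) ^ A) := by
      refine (measure_mono fun y hy => ?_).trans (hρ.volume_setOf_le_le hα (by positivity))
      exact (hy.2.trans_eq (by ring)).le
    have hft : ∀ y ∈ annulus k, f y ≤ ENNReal.ofReal (B * t ^ (-(A + 1))) := fun y hy =>
      (hf y ((le_mul_of_one_le_left hr.le (one_le_pow₀ one_le_two)).trans hy.1)).trans <|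
        ENNReal.ofReal_le_ofReal <| mul_le_mul_of_nonneg_left
          (Real.rpow_le_rpow_of_nonpos ht hy.1 (by linarith)) hB
    calc ∫⁻ y in annulus k, f y
        ≤ ∫⁻ _ in annulus k, ENNReal.ofReal (B * t ^ (-(A + 1))) :=
          setLIntegral_mono measurable_const hft
      _ ≤ ENNReal.ofReal (B * t ^ (-(A + 1))) * ENNReal.ofReal (2 ^ n * (2 * t) ^ A) := by
          rw [setLIntegral_const]
          gcongr
      _ = ENNReal.ofReal (c * (1 / 2) ^ k) := by
          rw [← ENNReal.ofReal_mul (by positivity)]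
          congr 1
          rw [Real.mul_rpow zero_le_two ht.le, Real.rpow_neg ht.le, Real.rpow_add_one ht.ne']
          simp only [c, t, one_div, inv_pow]
          field_simp
  calc ∫⁻ y in {y | r ≤ ρ y}, f y
      ≤ ∫⁻ y in ⋃ k, annulus k, f y := lintegral_mono_set hcover
    _ ≤ ∑' k, ∫⁻ y in annulus k, f y := lintegral_iUnion_le _ _
    _ ≤ ∑' k : ℕ, ENNReal.ofReal (c * (1 / 2) ^ k) := ENNReal.tsum_le_tsum hannulus
    _ = ENNReal.ofReal (c * 2) := by
      rw [← ENNReal.ofReal_tsum_of_nonneg (fun k => by positivity)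
        (summable_geometric_two.mul_left c), tsum_mul_left, tsum_geometric_two]

lemma half_le_map_sub (hρ : IsNorm α ρ) (hα : ∀ i, 1 ≤ α i) {x y : Fin n → ℝ}
    (hxy : 2 * ρ x ≤ ρ y) : ρ y / 2 ≤ ρ (y - x) := by
  linarith [abs_le.mp (hρ.abs_sub_map_sub_le hα x y)]

lemma abs_normalize_sub_apply_le (hρ : IsNorm α ρ) (hα : ∀ i, 1 ≤ α i) {x y : Fin n → ℝ}
    (hx : x ≠ 0) (hxy : 2 * ρ x ≤ ρ y) (i : Fin n) :
    |normalize α ρ (y - x) i - normalize α ρ y i| ≤ (2 + α i * 2 ^ (α i + 1)) * (ρ x / ρ y) := by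
  have hρx := hρ.pos x hx
  set S := ρ (y - x)
  set T := ρ y
  have hT : 0 < T := by linarith
  have hS : T / 2 ≤ S := hρ.half_le_map_sub hα hxy
  have hSpos : 0 < S := by linarith
  have hαi : 0 ≤ α i := zero_le_one.trans (hα i)
  have hsplit : normalize α ρ (y - x) i - normalize α ρ y i =
      -(x i * S ^ (-α i)) + y i * (S ^ (-α i) - T ^ (-α i)) := by
    simp only [normalize, Pi.sub_apply, Real.rpow_neg hSpos.le, Real.rpow_neg hT.le, S, T]
    ring
  have hshift : |x i| * S ^ (-α i) ≤ 2 * (ρ x / T) := by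
    have hle : ρ x / S ≤ 1 := (div_le_one hSpos).mpr (by linarith)
    calc |x i| * S ^ (-α i) ≤ ρ x ^ α i * S ^ (-α i) := by gcongr; exact hρ.abs_apply_le x i
      _ = (ρ x / S) ^ α i := by rw [Real.div_rpow hρx.le hSpos.le, Real.rpow_neg hSpos.le]; rfl
      _ ≤ ρ x / S := by
        simpa using Real.rpow_le_rpow_of_exponent_ge (div_pos hρx hSpos) hle (hα i)
      _ ≤ ρ x / (T / 2) := by gcongr
      _ = 2 * (ρ x / T) := by field_simp
  have hscale : |y i| * |S ^ (-α i) - T ^ (-α i)| ≤ α i * 2 ^ (α i + 1) * (ρ x / T) := by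
    calc |y i| * |S ^ (-α i) - T ^ (-α i)|
        ≤ T ^ α i * (α i * 2 ^ (α i + 1) * T ^ (-(α i + 1)) * ρ x) := by
          gcongr
          · exact hρ.abs_apply_le y i
          · exact (abs_rpow_neg_sub_rpow_neg_le_of_half_le hαi hT hS).trans
              (by gcongr; exact hρ.abs_sub_map_sub_le hα x y)
      _ = α i * 2 ^ (α i + 1) * (ρ x / T) := by
          rw [Real.rpow_neg hT.le, Real.rpow_add_one hT.ne']
          field_simp
  calc |normalize α ρ (y - x) i - normalize α ρ y i|
      ≤ |-(x i * S ^ (-α i))| + |y i * (S ^ (-α i) - T ^ (-α i))| := hsplit ▸ abs_add_le _ _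
    _ = |x i| * S ^ (-α i) + |y i| * |S ^ (-α i) - T ^ (-α i)| := by
        rw [abs_neg, abs_mul, abs_mul, abs_of_nonneg (Real.rpow_nonneg hSpos.le _)]
    _ ≤ (2 + α i * 2 ^ (α i + 1)) * (ρ x / T) := by linarith

lemma norm_normalize_sub_le (hρ : IsNorm α ρ) (hα : ∀ i, 1 ≤ α i) {x y : Fin n → ℝ}
    (hx : x ≠ 0) (hxy : 2 * ρ x ≤ ρ y) :
    ‖normalize α ρ (y - x) - normalize α ρ y‖ ≤
      (∑ i, (2 + α i * 2 ^ (α i + 1))) * (ρ x / ρ y) := by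
  have hterm : ∀ i, 0 ≤ 2 + α i * 2 ^ (α i + 1) := fun i =>
    add_nonneg zero_le_two (mul_nonneg (zero_le_one.trans (hα i)) (by positivity))
  have hratio : 0 ≤ ρ x / ρ y := div_nonneg (hρ.nonneg x) (hρ.nonneg y)
  refine (pi_norm_le_iff_of_nonneg (mul_nonneg (Finset.sum_nonneg fun i _ => hterm i) hratio)).mpr
    fun i => ?_
  rw [Pi.sub_apply, Real.norm_eq_abs]
  exact (hρ.abs_normalize_sub_apply_le hα hx hxy i).trans <| mul_le_mul_of_nonneg_right
    (Finset.single_le_sum (fun j _ => hterm j) (Finset.mem_univ i)) hratio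

lemma exists_abs_kernel_sub_le (hρ : IsNorm α ρ) (hα : ∀ i, 1 ≤ α i)
    {Y : (Fin n → ℝ) → ℝ} {M : ℝ} {K : NNReal} (hM : ∀ u, ‖u‖ ≤ 1 → |Y u| ≤ M)
    (hK : LipschitzOnWith K Y (Metric.closedBall 0 1)) {A : ℝ} (hA : 0 ≤ A) :
    ∃ C, 0 ≤ C ∧ ∀ x y, x ≠ 0 → 2 * ρ x ≤ ρ y →
      |Y (normalize α ρ (y - x)) * ρ (y - x) ^ (-A) - Y (normalize α ρ y) * ρ y ^ (-A)| ≤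
        C * ρ x * ρ y ^ (-(A + 1)) := by
  set D := ∑ i, (2 + α i * 2 ^ (α i + 1))
  have hD : 0 ≤ D := Finset.sum_nonneg fun i _ =>
    add_nonneg zero_le_two (mul_nonneg (zero_le_one.trans (hα i)) (by positivity))
  have hM₀ : 0 ≤ M := (abs_nonneg _).trans (hM 0 (by simp))
  refine ⟨K * D * 2 ^ A + M * A * 2 ^ (A + 1), by positivity, fun x y hx hxy => ?_⟩
  have hρx := hρ.pos x hx
  set u := normalize α ρ (y - x)
  set v := normalize α ρ y
  set S := ρ (y - x)
  set T := ρ y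
  have hT : 0 < T := by linarith
  have hS : T / 2 ≤ S := hρ.half_le_map_sub hα hxy
  have hSpos : 0 < S := by linarith
  have hYuv : |Y u - Y v| ≤ K * (D * (ρ x / T)) := by
    rw [← Real.dist_eq]
    refine (hK.dist_le_mul u (by simpa using hρ.norm_normalize_le_one (y - x)) v
      (by simpa using hρ.norm_normalize_le_one y)).trans ?_
    rw [dist_eq_norm]
    gcongr
    exact hρ.norm_normalize_sub_le hα hx hxy
  have hSA : S ^ (-A) ≤ 2 ^ A * T ^ (-A) := by
    calc S ^ (-A) ≤ (T / 2) ^ (-A) := Real.rpow_le_rpow_of_nonpos (half_pos hT) hS (by linarith)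
      _ = 2 ^ A * T ^ (-A) := by
        rw [Real.div_rpow hT.le zero_le_two, Real.rpow_neg zero_le_two, div_inv_eq_mul, mul_comm]
  have hradial : |S ^ (-A) - T ^ (-A)| ≤ A * 2 ^ (A + 1) * T ^ (-(A + 1)) * ρ x :=
    (abs_rpow_neg_sub_rpow_neg_le_of_half_le hA hT hS).trans
      (by gcongr; exact hρ.abs_sub_map_sub_le hα x y)
  have hTA : T ^ (-A) / T = T ^ (-(A + 1)) := by
    rw [neg_add, Real.rpow_add hT, Real.rpow_neg_one, div_eq_mul_inv]
  calc |Y u * S ^ (-A) - Y v * T ^ (-A)|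
      = |(Y u - Y v) * S ^ (-A) + Y v * (S ^ (-A) - T ^ (-A))| := by ring_nf
    _ ≤ |Y u - Y v| * S ^ (-A) + |Y v| * |S ^ (-A) - T ^ (-A)| := by
      refine (abs_add_le _ _).trans_eq ?_
      rw [abs_mul, abs_mul, abs_of_nonneg (Real.rpow_nonneg hSpos.le _)]
    _ ≤ K * (D * (ρ x / T)) * (2 ^ A * T ^ (-A)) +
        M * (A * 2 ^ (A + 1) * T ^ (-(A + 1)) * ρ x) := by
      gcongr
      · exact hM v (hρ.norm_normalize_le_one y)
    _ = (K * D * 2 ^ A + M * A * 2 ^ (A + 1)) * ρ x * T ^ (-(A + 1)) := by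
      rw [← hTA]
      ring

theorem exists_setLIntegral_abs_kernel_sub_le (hρ : IsNorm α ρ) (hα : ∀ i, 1 ≤ α i)
    {Y : (Fin n → ℝ) → ℝ} {M : ℝ} {K : NNReal} (hM : ∀ u, ‖u‖ ≤ 1 → |Y u| ≤ M)
    (hK : LipschitzOnWith K Y (Metric.closedBall 0 1)) {c : ℝ} (hc : 2 ≤ c) :
    ∃ C, ∀ x, x ≠ 0 → ∫⁻ y in {y | c * ρ x ≤ ρ y},
      ENNReal.ofReal |Y (normalize α ρ (y - x)) * ρ (y - x) ^ (-∑ i, α i) -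
        Y (normalize α ρ y) * ρ y ^ (-∑ i, α i)| ≤ ENNReal.ofReal C := by
  have hα₀ : ∀ i, 0 ≤ α i := fun i => zero_le_one.trans (hα i)
  obtain ⟨C, hC, hpointwise⟩ :=
    hρ.exists_abs_kernel_sub_le hα hM hK (Finset.univ.sum_nonneg fun i _ => hα₀ i)
  refine ⟨C * 2 ^ n * 2 ^ (∑ i, α i) / c * 2, fun x hx => ?_⟩
  have hρx := hρ.pos x hx
  have hc₀ : 0 < c := by linarith
  refine (hρ.setLIntegral_le_of_le_rpow_neg hα₀ (mul_pos hc₀ hρx) (mul_nonneg hC hρx.le)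
    fun y hy => ENNReal.ofReal_le_ofReal ?_).trans_eq ?_
  · exact hpointwise x y hx ((mul_le_mul_of_nonneg_right hc hρx.le).trans hy)
  · congr 1
    field_simp

end IsNorm

end MixedHomogeneous

theorem stmt_15_general {n : ℕ} (α : Fin n → ℝ) (hα : ∀ i, 1 ≤ α i)
    (A : ℝ) (hA : A = ∑ i, α i)
    (ρ : (Fin n → ℝ) → ℝ) (hρ0 : ρ 0 = 0)
    (hρpos : ∀ x, x ≠ 0 → 0 < ρ x)
    (hρeq : ∀ x, x ≠ 0 → ∑ i, x i ^ 2 * (ρ x) ^ (-(2 * α i)) = 1)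
    (P : MvPolynomial (Fin n) ℝ)
    (H : (Fin n → ℝ) → ℝ)
    (hH : ∀ z : Fin n → ℝ, H z = eval (fun i => z i / ρ z ^ α i) P * ρ z ^ (-A)) :
    ∃ C : ℝ, ∀ x : Fin n → ℝ, x ≠ 0 →
      ∫⁻ y in {y : Fin n → ℝ | 4 * ρ x ≤ ρ y},
        ENNReal.ofReal |H (y - x) - H y| ≤ ENNReal.ofReal C := by
  have hρ : MixedHomogeneous.IsNorm α ρ := ⟨hρ0, hρpos, hρeq⟩
  have hP : ContDiff ℝ 1 fun u => eval u P := (AnalyticOnNhd.eval_mvPolynomial P).contDiff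
  have hball : IsCompact (Metric.closedBall (0 : Fin n → ℝ) 1) := isCompact_closedBall 0 1
  obtain ⟨M, hM⟩ := hball.exists_bound_of_continuousOn hP.continuous.continuousOn
  obtain ⟨K, hK⟩ :=
    hP.locallyLipschitz.locallyLipschitzOn.exists_lipschitzOnWith_of_compact hball
  obtain ⟨C, hC⟩ := hρ.exists_setLIntegral_abs_kernel_sub_le hα
    (fun u hu => hM u (mem_closedBall_zero_iff.mpr hu)) hK (by norm_num : (2 : ℝ) ≤ 4)
  refine ⟨C, fun x hx => ?_⟩
  simp only [hH, hA]
  exact hC x hx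

/-- Hörmander integral condition: the kernel `H(x) = Y(x̄)ρ(x)^{−α}`, with Y a
spherical harmonic of degree m (restriction of a homogeneous harmonic
polynomial, with the standard sup bounds on the sphere), satisfies
`∫_{ρ(y) ≥ 4ρ(x)} |H(y−x) − H(y)| dy ≤ C` with C independent of x ≠ 0. -/
theorem stmt_15 {n : ℕ} (hn : 1 ≤ n) (α : Fin n → ℝ) (hα : ∀ i, 1 ≤ α i)
    (A : ℝ) (hA : A = ∑ i, α i)
    (ρ : (Fin n → ℝ) → ℝ) (hρ0 : ρ 0 = 0)
    (hρpos : ∀ x, x ≠ 0 → 0 < ρ x)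
    (hρeq : ∀ x, x ≠ 0 → ∑ i, x i ^ 2 * (ρ x) ^ (-(2 * α i)) = 1)
    (hρuniq : ∀ x, x ≠ 0 → ∀ t : ℝ, 0 < t →
      (∑ i, x i ^ 2 * t ^ (-(2 * α i)) = 1) → t = ρ x)
    (m : ℕ) (P : MvPolynomial (Fin n) ℝ) (hhom : P.IsHomogeneous m)
    (hharm : (∑ i, pderiv i (pderiv i P)) = 0)
    (CY : ℝ)
    (hY : ∀ x : Fin n → ℝ, ∑ i, x i ^ 2 = 1 →
      |eval x P| ≤ CY * (m : ℝ) ^ (((n : ℝ) - 2) / 2))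
    (hY' : ∀ (j : Fin n) (x : Fin n → ℝ), ∑ i, x i ^ 2 = 1 →
      |eval x (pderiv j P)| ≤ CY * (m : ℝ) ^ (1 + ((n : ℝ) - 2) / 2))
    (H : (Fin n → ℝ) → ℝ)
    (hH : ∀ z : Fin n → ℝ, H z = eval (fun i => z i / ρ z ^ α i) P * ρ z ^ (-A)) :
    ∃ C : ℝ, ∀ x : Fin n → ℝ, x ≠ 0 →
      ∫⁻ y in {y : Fin n → ℝ | 4 * ρ x ≤ ρ y},
        ENNReal.ofReal |H (y - x) - H y| ≤ ENNReal.ofReal C :=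
  stmt_15_general α hα A hA ρ hρ0 hρpos hρeq P H hH
end
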